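/- arXiv:0704.1933 — 3 statements merged into one kernel-verified Lean document; each statement's English description precedes it below -/
import Mathlib

section
/- Let N, n ∈ ℕ, let ξ₀, ξ, C⁻, C⁺, μ⁻, μ⁺, α₁,…,α_n be real numbers and a₁,…,a_n, A₁,…,A_n ∈ ℂ. Let R > 0 and let f be holomorphic on {z ∈ ℂ : |z| > R} with f(z) − z → 0 as |z| → ∞ (hydrodynamic normalization). Suppose there is R' ≥ R such that for all z with |z| > R' one has f'(z) ≠ 0, f(z) ∉ {ξ₀, a₁,…,a_n}, z ∉ {ξ, C⁻, C⁺, A₁,…,A_n}, and the identity 2/(z−ξ) + μ⁻/(z−C⁻) + μ⁺/(z−C⁺) + Σ_{j=1}^{n} α_j/(z−A_j) = (N/(f(z)−ξ₀) + Σ_{j=1}^{n} α_j/(f(z)−a_j))·f'(z) + 2·f''(z)/f'(z). Then 2 + μ⁻ + μ⁺ = N, and 2ξ = −μ⁻·C⁻ − μ⁺·C⁺ − Σ_{j=1}^{n} α_j·A_j + Σ₀, where Σ₀ = N·ξ₀ + Σ_{j=1}^{n} α_j·a_j. (Formula (3) of Theorem 1.2, obtained by matching the 1/z and 1/z² coefficients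 at ∞.) -/
/-!
Cauchy's estimate on the disc of radius `|z| / 2` about `z` turns `f z - z → 0` into
`z (f' z - 1) → 0`, and, applied once more to `z (f' z - 1)`, into `z ^ 2 f'' z → 0`.
Consequently each term of the identity has an expansion `a / z + b / z ^ 2 + o(1 / z ^ 2)` at `∞`:
`c / (z - p)` and `c f' / (f - p)` both give `(c, c p)`, and `f'' / f'` gives `(0, 0)`.
Comparing the coefficients of `1 / z` and `1 / z ^ 2` on both sides gives the two formulas.
-/

open Complex Filter Bornology Metric Topology

lemma isOpen_lt_norm (R : ℝ) : IsOpen {z : ℂ | R < ‖z‖} :=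
  isOpen_lt continuous_const continuous_norm

lemma tendsto_smul_deriv_cobounded {E : Type*} [NormedAddCommGroup E] [NormedSpace ℂ E]
    {g : ℂ → E} {R : ℝ} (hg : DifferentiableOn ℂ g {z | R < ‖z‖})
    (h0 : Tendsto g (cobounded ℂ) (𝓝 0)) :
    Tendsto (fun z => z • deriv g z) (cobounded ℂ) (𝓝 0) := by
  refine Metric.tendsto_nhds.2 fun ε hε => ?_
  obtain ⟨ρ, -, hρ⟩ := hasBasis_cobounded_norm.eventually_iff.1
    (Metric.tendsto_nhds.1 h0 (ε / 3) (by positivity))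
  filter_upwards [eventually_cobounded_le_norm (2 * ρ),
    tendsto_norm_cobounded_atTop.eventually_gt_atTop (2 * R),
    tendsto_norm_cobounded_atTop.eventually_gt_atTop 0] with z hρz hRz hz
  have hball : ∀ w ∈ closedBall z (‖z‖ / 2), ‖z‖ / 2 ≤ ‖w‖ := fun w hw => by
    rw [mem_closedBall, dist_eq_norm, norm_sub_rev] at hw
    linarith [norm_sub_norm_le z w]
  have hcauchy : ‖deriv g z‖ ≤ (ε / 3) / (‖z‖ / 2) := by
    refine norm_deriv_le_of_forall_mem_sphere_norm_le (by positivity)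
      (hg.diffContOnCl_ball fun w hw => ?_) fun w hw => ?_
    · exact (by linarith [hball w hw] : R < ‖w‖)
    · simpa using (hρ (by linarith [hball w (sphere_subset_closedBall hw)] : ρ ≤ ‖w‖)).le
  rw [dist_zero_right, norm_smul]
  calc ‖z‖ * ‖deriv g z‖ ≤ ‖z‖ * ((ε / 3) / (‖z‖ / 2)) := by gcongr
    _ = 2 * ε / 3 := by field_simp
    _ < ε := by linarith

lemma tendsto_zero_of_tendsto_mul {g : ℂ → ℂ} {b : ℂ}
    (h : Tendsto (fun z => z * g z) (cobounded ℂ) (𝓝 b)) :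
    Tendsto g (cobounded ℂ) (𝓝 0) := by
  simpa using (tendsto_inv₀_cobounded.mul h).congr' <| by
    filter_upwards [tendsto_norm_cobounded_atTop.eventually_gt_atTop 0] with z hz
    rw [inv_mul_cancel_left₀ (norm_pos_iff.1 hz)]

/-- `u z = a / z + b / z ^ 2 + o(1 / z ^ 2)` as `z → ∞`. -/
def HasExpansionAtInfty (u : ℂ → ℂ) (a b : ℂ) : Prop :=
  Tendsto (fun z => z * (z * u z - a)) (cobounded ℂ) (𝓝 b)

namespace HasExpansionAtInfty

variable {u v : ℂ → ℂ} {a b a' b' : ℂ}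

lemma add (hu : HasExpansionAtInfty u a b) (hv : HasExpansionAtInfty v a' b') :
    HasExpansionAtInfty (fun z => u z + v z) (a + a') (b + b') :=
  (Tendsto.add hu hv).congr fun z => by ring

lemma const_mul (hu : HasExpansionAtInfty u a b) (c : ℂ) :
    HasExpansionAtInfty (fun z => c * u z) (c * a) (c * b) :=
  (tendsto_const_nhds.mul hu).congr fun z => by ring

lemma sum {ι : Type*} (s : Finset ι) {u : ι → ℂ → ℂ} {a b : ι → ℂ}
    (h : ∀ i ∈ s, HasExpansionAtInfty (u i) (a i) (b i)) :
    HasExpansionAtInfty (fun z => ∑ i ∈ s, u i z) (∑ i ∈ s, a i) (∑ i ∈ s, b i) :=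
  (tendsto_finsetSum s h).congr fun z => by
    simp only [Finset.mul_sum, Finset.sum_sub_distrib, mul_sub]

lemma tendsto_mul (hu : HasExpansionAtInfty u a b) :
    Tendsto (fun z => z * u z) (cobounded ℂ) (𝓝 a) := by
  simpa using (tendsto_zero_of_tendsto_mul hu).add_const a

lemma unique (hu : HasExpansionAtInfty u a b) (hv : HasExpansionAtInfty v a' b')
    (huv : u =ᶠ[cobounded ℂ] v) : a = a' ∧ b = b' := by
  have ha : a = a' := tendsto_nhds_unique hu.tendsto_mul
    (hv.tendsto_mul.congr' <| huv.mono fun z hz => by simp only [hz])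
  subst ha
  exact ⟨rfl, tendsto_nhds_unique hu
    (Tendsto.congr' (huv.mono fun z hz => by simp only [hz]) hv)⟩

end HasExpansionAtInfty

lemma tendsto_div_sub_of_tendsto_sub {f : ℂ → ℂ}
    (hnorm : Tendsto (fun z => f z - z) (cobounded ℂ) (𝓝 0)) (p : ℂ) :
    Tendsto (fun z => z / (f z - p)) (cobounded ℂ) (𝓝 1) := by
  have h := ((hnorm.mul tendsto_inv₀_cobounded).add_const 1).sub
    (tendsto_inv₀_cobounded.const_mul p)
  rw [zero_mul, zero_add, mul_zero, sub_zero] at h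
  simpa using (h.inv₀ one_ne_zero).congr' <| by
    filter_upwards [tendsto_norm_cobounded_atTop.eventually_gt_atTop 0] with z hz
    field_simp [norm_pos_iff.1 hz]
    ring

section Hydrodynamic

variable {f : ℂ → ℂ} {R : ℝ} (hf : DifferentiableOn ℂ f {z | R < ‖z‖})
  (hnorm : Tendsto (fun z => f z - z) (cobounded ℂ) (𝓝 0))
include hf hnorm

lemma tendsto_mul_deriv_sub_one :
    Tendsto (fun z => z * (deriv f z - 1)) (cobounded ℂ) (𝓝 0) := by
  refine (tendsto_smul_deriv_cobounded (g := fun z => f z - z)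
    (hf.sub differentiableOn_id) hnorm).congr' ?_
  filter_upwards [tendsto_norm_cobounded_atTop.eventually_gt_atTop R] with z hz
  have hd := (hf.differentiableAt ((isOpen_lt_norm R).mem_nhds hz)).hasDerivAt
  rw [smul_eq_mul, (hd.fun_sub (hasDerivAt_id' z)).deriv]

lemma tendsto_sq_mul_deriv_deriv :
    Tendsto (fun z => z ^ 2 * deriv (deriv f) z) (cobounded ℂ) (𝓝 0) := by
  have hf' := hf.deriv (isOpen_lt_norm R)
  have h := tendsto_smul_deriv_cobounded (g := fun z => z * (deriv f z - 1))
    (differentiableOn_id.mul (hf'.sub_const 1))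
    (tendsto_mul_deriv_sub_one hf hnorm)
  simpa using (h.sub (tendsto_mul_deriv_sub_one hf hnorm)).congr' <| by
    filter_upwards [tendsto_norm_cobounded_atTop.eventually_gt_atTop R] with z hz
    have hd := (hf'.differentiableAt ((isOpen_lt_norm R).mem_nhds hz)).hasDerivAt
    rw [smul_eq_mul, ((hasDerivAt_id' z).fun_mul (hd.sub_const 1)).deriv]
    ring

lemma hasExpansionAtInfty_deriv_div_sub (p : ℂ) :
    HasExpansionAtInfty (fun z => deriv f z / (f z - p)) 1 p := by
  have hq := tendsto_div_sub_of_tendsto_sub hnorm p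
  have h := (((tendsto_mul_deriv_sub_one hf hnorm).sub hnorm).add_const p).mul hq
  simp only [sub_zero, zero_add, mul_one] at h
  refine h.congr' ?_
  filter_upwards [hq.eventually_ne one_ne_zero] with z hz
  have hfp : f z - p ≠ 0 := (div_ne_zero_iff.1 hz).2
  field_simp
  ring

lemma hasExpansionAtInfty_div_sub_mul_deriv (c p : ℂ) :
    HasExpansionAtInfty (fun z => c / (f z - p) * deriv f z) c (c * p) := by
  simpa [mul_one, div_eq_mul_inv, mul_comm, mul_left_comm, mul_assoc] using
    (hasExpansionAtInfty_deriv_div_sub hf hnorm p).const_mul c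

lemma hasExpansionAtInfty_deriv_deriv_div_deriv :
    HasExpansionAtInfty (fun z => deriv (deriv f) z / deriv f z) 0 0 := by
  have hf' : Tendsto (deriv f) (cobounded ℂ) (𝓝 1) := by
    simpa using (tendsto_zero_of_tendsto_mul (tendsto_mul_deriv_sub_one hf hnorm)).add_const 1
  have h := (tendsto_sq_mul_deriv_deriv hf hnorm).div hf' one_ne_zero
  rw [zero_div] at h
  exact h.congr fun z => by simp only [Pi.div_apply]; ring

end Hydrodynamic

lemma hasExpansionAtInfty_div_sub (c p : ℂ) :
    HasExpansionAtInfty (fun z => c / (z - p)) c (c * p) := by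
  simpa using hasExpansionAtInfty_div_sub_mul_deriv (f := fun z => z) (R := 0)
    differentiableOn_id (by simp) c p

theorem stmt_4_general (N n : ℕ) (ξ₀ ξ Cm Cp μm μp : ℝ) (α : Fin n → ℝ)
    (a A : Fin n → ℂ) (R : ℝ) (f : ℂ → ℂ)
    (hf : ∀ z : ℂ, R < ‖z‖ → DifferentiableAt ℂ f z)
    (hnorm : Tendsto (fun z => f z - z) (comap (fun z : ℂ => ‖z‖) atTop) (nhds 0))
    (R' : ℝ)
    (hid : ∀ z : ℂ, R' < ‖z‖ →
      deriv f z ≠ 0 ∧ f z ≠ (ξ₀ : ℂ) ∧ (∀ j, f z ≠ a j) ∧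
      z ≠ (ξ : ℂ) ∧ z ≠ (Cm : ℂ) ∧ z ≠ (Cp : ℂ) ∧ (∀ j, z ≠ A j) ∧
      2 / (z - (ξ : ℂ)) + (μm : ℂ) / (z - (Cm : ℂ)) + (μp : ℂ) / (z - (Cp : ℂ))
          + ∑ j, (α j : ℂ) / (z - A j)
        = ((N : ℂ) / (f z - (ξ₀ : ℂ)) + ∑ j, (α j : ℂ) / (f z - a j)) * deriv f z
          + 2 * deriv (deriv f) z / deriv f z) :
    2 + μm + μp = (N : ℝ) ∧
    ((2 * ξ : ℝ) : ℂ)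
      = -(μm : ℂ) * (Cm : ℂ) - (μp : ℂ) * (Cp : ℂ) - (∑ j, (α j : ℂ) * A j)
        + ((N : ℂ) * (ξ₀ : ℂ) + ∑ j, (α j : ℂ) * a j) := by
  rw [comap_norm_atTop] at hnorm
  have hfU : DifferentiableOn ℂ f {z | R < ‖z‖} := fun z hz => (hf z hz).differentiableWithinAt
  have hlhs := (((hasExpansionAtInfty_div_sub 2 ξ).add (hasExpansionAtInfty_div_sub μm Cm)).add
    (hasExpansionAtInfty_div_sub μp Cp)).add
    (.sum Finset.univ fun j _ => hasExpansionAtInfty_div_sub (α j) (A j))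
  have hrhs := ((hasExpansionAtInfty_div_sub_mul_deriv hfU hnorm N ξ₀).add
    (.sum Finset.univ fun j _ => hasExpansionAtInfty_div_sub_mul_deriv hfU hnorm (α j) (a j))).add
    ((hasExpansionAtInfty_deriv_deriv_div_deriv hfU hnorm).const_mul 2)
  obtain ⟨h1, h2⟩ := hlhs.unique hrhs <| by
    filter_upwards [tendsto_norm_cobounded_atTop.eventually_gt_atTop R'] with z hz
    rw [(hid z hz).2.2.2.2.2.2.2, add_mul, Finset.sum_mul]
    ring
  refine ⟨by exact_mod_cast (by linear_combination h1 : (2 + μm + μp : ℂ) = N), ?_⟩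
  push_cast
  linear_combination h2

/-- formula (3) of Theorem 1.2, in logarithmic-derivative form.
If `f` is holomorphic on `{|z| > R}` with hydrodynamic normalization
`f(z) - z → 0` as `|z| → ∞`, and for all large `|z|` the logarithmic derivative of
`Q(f z)·f'(z)² = R'(z-ξ)²(z-C⁻)^{μ⁻}(z-C⁺)^{μ⁺}∏(z-A_j)^{α_j}` identity
`2/(z-ξ) + μ⁻/(z-C⁻) + μ⁺/(z-C⁺) + Σ α_j/(z-A_j)
  = (N/(f z-ξ₀) + Σ α_j/(f z-a_j))·f'(z) + 2 f''(z)/f'(z)`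
holds, then matching the `1/z` and `1/z²` coefficients at `∞` gives
`2 + μ⁻ + μ⁺ = N` and `2ξ = -μ⁻C⁻ - μ⁺C⁺ - Σ α_j A_j + Σ₀` with
`Σ₀ = Nξ₀ + Σ α_j a_j`. -/
theorem stmt_4 (N n : ℕ) (ξ₀ ξ Cm Cp μm μp : ℝ) (α : Fin n → ℝ)
    (a A : Fin n → ℂ) (R : ℝ) (hR : 0 < R) (f : ℂ → ℂ)
    (hf : ∀ z : ℂ, R < ‖z‖ → DifferentiableAt ℂ f z)
    (hnorm : Tendsto (fun z => f z - z) (comap (fun z : ℂ => ‖z‖) atTop) (nhds 0))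
    (R' : ℝ) (hR' : R ≤ R')
    (hid : ∀ z : ℂ, R' < ‖z‖ →
      deriv f z ≠ 0 ∧ f z ≠ (ξ₀ : ℂ) ∧ (∀ j, f z ≠ a j) ∧
      z ≠ (ξ : ℂ) ∧ z ≠ (Cm : ℂ) ∧ z ≠ (Cp : ℂ) ∧ (∀ j, z ≠ A j) ∧
      2 / (z - (ξ : ℂ)) + (μm : ℂ) / (z - (Cm : ℂ)) + (μp : ℂ) / (z - (Cp : ℂ))
          + ∑ j, (α j : ℂ) / (z - A j)
        = ((N : ℂ) / (f z - (ξ₀ : ℂ)) + ∑ j, (α j : ℂ) / (f z - a j)) * deriv f z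
          + 2 * deriv (deriv f) z / deriv f z) :
    2 + μm + μp = (N : ℝ) ∧
    ((2 * ξ : ℝ) : ℂ)
      = -(μm : ℂ) * (Cm : ℂ) - (μp : ℂ) * (Cp : ℂ) - (∑ j, (α j : ℂ) * A j)
        + ((N : ℂ) * (ξ₀ : ℂ) + ∑ j, (α j : ℂ) * a j) :=
  stmt_4_general N n ξ₀ ξ Cm Cp μm μp α a A R f hf hnorm R' hid
end

section
/- Let T > 0, t₀ ∈ (0,T), let ξ : (0,T) → ℝ be differentiable, let U ⊆ ℂ be an open neighborhood of ξ(t₀), and let f : (0,T) × U → ℂ be such that z ↦ f_t(z) is holomorphic on U for each t, the time derivative ∂_t f_t(z) exists and is jointly continuous on (0,T) × U, and ∂_t f_t(z) = −2·f_t'(z)/(z − ξ(t)) for all t and all z ∈ U with z ≠ ξ(t). Define γ(t) = f_t(ξ(t)) and assume f'_{t₀}(ξ(t₀)) = 0. Let Q be holomorphic at γ(t₀) with Q(γ(t₀)) ≠ 0, and let Φ := lim_{z→ξ(t₀)} Q(f_{t₀}(z))·f_{t₀}'(z)²/(z − ξ(t₀))² (this limit exists and equals Q(γ(t₀))·f''_{t₀}(ξ(t₀))²).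 Then γ is differentiable at t₀, γ'(t₀) = −2·f''_{t₀}(ξ(t₀)), and Q(γ(t₀))·γ'(t₀)² = 4·Φ. (Theorem 1.3 in squared, branch-free form: the tip of the slit moves with γ̇(t) = −2√(Φ_t(ξ(t))/Q(γ(t))), where Φ_t(z) = Q(f_t(z))f_t'(z)²/(z−ξ(t))².) -/
/-!
The tip is `γ(t) = f_t(ξ(t))`. Split `γ(t) - γ(t₀)` as
`(f_t(ξ(t)) - f_{t₀}(ξ(t))) + (f_{t₀}(ξ(t)) - f_{t₀}(ξ(t₀)))`. The second term is `o(t - t₀)`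
because `ξ(t₀)` is a critical point of `f_{t₀}`. The first is `(t - t₀)·∂_t f_{t₀}(ξ(t₀)) + o(t - t₀)`
by the mean value inequality in `t` at the frozen point `ξ(t)`, using joint continuity of `∂_t f`.
Finally `∂_t f_{t₀}` is continuous at `ξ(t₀)`, so its value there is the limit of the Loewner
right-hand side `-2 f_{t₀}'(z)/(z - ξ(t₀)) → -2 f_{t₀}''(ξ(t₀))`.
-/

open Filter Topology Asymptotics

theorem tendsto_div_sub_of_hasDerivAt {𝕜 : Type*} [NontriviallyNormedField 𝕜] {g : 𝕜 → 𝕜}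
    {a x₀ : 𝕜} (hg : HasDerivAt g a x₀) (h0 : g x₀ = 0) :
    Tendsto (fun z => g z / (z - x₀)) (𝓝[≠] x₀) (𝓝 a) :=
  (hasDerivAt_iff_tendsto_slope.1 hg).congr fun z => by simp [slope_def_field, h0]

theorem tendsto_mul_deriv_sq_div_sq_of_deriv_eq_zero {𝕜 : Type*} [NontriviallyNormedField 𝕜]
    {f Q : 𝕜 → 𝕜} {a x₀ : 𝕜} (hf : ContinuousAt f x₀) (hf'' : HasDerivAt (deriv f) a x₀)
    (hcrit : deriv f x₀ = 0) (hQ : ContinuousAt Q (f x₀)) :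
    Tendsto (fun z => Q (f z) * deriv f z ^ 2 / (z - x₀) ^ 2) (𝓝[≠] x₀)
      (𝓝 (Q (f x₀) * a ^ 2)) := by
  have hQf : Tendsto (Q ∘ f) (𝓝[≠] x₀) (𝓝 (Q (f x₀))) :=
    (hQ.comp hf).tendsto.mono_left nhdsWithin_le_nhds
  refine (hQf.mul ((tendsto_div_sub_of_hasDerivAt hf'' hcrit).pow 2)).congr fun z => ?_
  simp only [Function.comp_apply, div_pow, mul_div_assoc]

theorem hasDerivAt_sub_apply_of_continuousAt {X G : Type*} [TopologicalSpace X]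
    [NormedAddCommGroup G] [NormedSpace ℝ G] {f F : ℝ → X → G} {x : ℝ → X} {t₀ : ℝ}
    (hf : ∀ᶠ p in 𝓝 (t₀, x t₀), HasDerivAt (fun s => f s p.2) (F p.1 p.2) p.1)
    (hF : ContinuousAt (Function.uncurry F) (t₀, x t₀)) (hx : ContinuousAt x t₀) :
    HasDerivAt (fun t => f t (x t) - f t₀ (x t)) (F t₀ (x t₀)) t₀ := by
  rw [hasDerivAt_iff_isLittleO, isLittleO_iff]
  intro c hc
  have hnear : ∀ᶠ p in 𝓝 (t₀, x t₀), HasDerivAt (fun s => f s p.2) (F p.1 p.2) p.1 ∧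
      ‖F p.1 p.2 - F t₀ (x t₀)‖ ≤ c :=
    hf.and <| (hF.eventually (Metric.closedBall_mem_nhds _ hc)).mono fun p hp =>
      mem_closedBall_iff_norm.1 hp
  obtain ⟨s, hs, v, hv, hsv⟩ := mem_nhds_prod_iff.1 hnear
  obtain ⟨δ, hδ, hball⟩ := Metric.mem_nhds_iff.1 hs
  filter_upwards [Metric.ball_mem_nhds t₀ hδ, hx hv] with t ht hxt
  have hslice (u : ℝ) (hu : u ∈ Metric.ball t₀ δ) := hsv (Set.mk_mem_prod (hball hu) hxt)
  have hmvt := (convex_ball t₀ δ).norm_image_sub_le_of_norm_hasDerivWithin_le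
    (f := fun u => f u (x t) - u • F t₀ (x t₀)) (f' := fun u => F u (x t) - F t₀ (x t₀))
    (s := Metric.ball t₀ δ)
    (fun u hu => by
      simpa using ((hslice u hu).1.fun_sub
        ((hasDerivAt_id u).smul_const (F t₀ (x t₀)))).hasDerivWithinAt)
    (fun u hu => (hslice u hu).2) (Metric.mem_ball_self hδ) (y := t) ht
  convert hmvt using 2
  rw [sub_smul]
  abel

theorem hasDerivAt_apply_of_hasDerivAt_zero {𝕜 : Type*} [NontriviallyNormedField 𝕜]
    [NormedAlgebra ℝ 𝕜] {f F : ℝ → 𝕜 → 𝕜} {x : ℝ → 𝕜} {t₀ : ℝ} {x' : 𝕜}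
    (hf : ∀ᶠ p in 𝓝 (t₀, x t₀), HasDerivAt (fun s => f s p.2) (F p.1 p.2) p.1)
    (hF : ContinuousAt (Function.uncurry F) (t₀, x t₀)) (hx : HasDerivAt x x' t₀)
    (hcrit : HasDerivAt (f t₀) 0 (x t₀)) :
    HasDerivAt (fun t => f t (x t)) (F t₀ (x t₀)) t₀ := by
  have hfrozen : HasDerivAt (fun t => f t₀ (x t)) 0 t₀ := by
    simpa [Function.comp_def] using hcrit.comp t₀ hx
  have hsum := hfrozen.fun_add (hasDerivAt_sub_apply_of_continuousAt hf hF hx.continuousAt)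
  rw [zero_add] at hsum
  exact hsum.congr_of_eventuallyEq (.of_forall fun t => by simp)

theorem stmt_8_general (T : ℝ) (t₀ : ℝ) (ht₀ : t₀ ∈ Set.Ioo 0 T)
    (ξ : ℝ → ℝ) (hξ : ∀ t ∈ Set.Ioo 0 T, DifferentiableAt ℝ ξ t)
    (U : Set ℂ) (hU : IsOpen U) (hmem : ((ξ t₀ : ℝ) : ℂ) ∈ U)
    (f F : ℝ → ℂ → ℂ)
    (hol : ∀ t ∈ Set.Ioo 0 T, DifferentiableOn ℂ (f t) U)
    (hF : ∀ t ∈ Set.Ioo 0 T, ∀ z ∈ U, HasDerivAt (fun s => f s z) (F t z) t)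
    (hFcont : ContinuousOn (fun p : ℝ × ℂ => F p.1 p.2) (Set.Ioo 0 T ×ˢ U))
    (hLoewner : ∀ t ∈ Set.Ioo 0 T, ∀ z ∈ U, z ≠ ((ξ t : ℝ) : ℂ) →
      F t z = -2 * deriv (f t) z / (z - ((ξ t : ℝ) : ℂ)))
    (γ : ℝ → ℂ) (hγ : ∀ t, γ t = f t ((ξ t : ℝ) : ℂ))
    (hcrit : deriv (f t₀) ((ξ t₀ : ℝ) : ℂ) = 0)
    (Q : ℂ → ℂ) (hQ : AnalyticAt ℂ Q (γ t₀))
    (Φ : ℂ)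
    (hΦ : Filter.Tendsto
      (fun z => Q (f t₀ z) * (deriv (f t₀) z) ^ 2 / (z - ((ξ t₀ : ℝ) : ℂ)) ^ 2)
      (nhdsWithin ((ξ t₀ : ℝ) : ℂ) {((ξ t₀ : ℝ) : ℂ)}ᶜ) (nhds Φ)) :
    Φ = Q (γ t₀) * (deriv (deriv (f t₀)) ((ξ t₀ : ℝ) : ℂ)) ^ 2 ∧
    HasDerivAt γ (-2 * deriv (deriv (f t₀)) ((ξ t₀ : ℝ) : ℂ)) t₀ ∧
    Q (γ t₀) * (-2 * deriv (deriv (f t₀)) ((ξ t₀ : ℝ) : ℂ)) ^ 2 = 4 * Φ := by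
  set x₀ : ℂ := ((ξ t₀ : ℝ) : ℂ)
  set a : ℂ := deriv (deriv (f t₀)) x₀
  have hUx₀ : U ∈ 𝓝 x₀ := hU.mem_nhds hmem
  have hdomain : Set.Ioo 0 T ×ˢ U ∈ 𝓝 (t₀, x₀) := (isOpen_Ioo.prod hU).mem_nhds ⟨ht₀, hmem⟩
  have hf : DifferentiableAt ℂ (f t₀) x₀ := (hol t₀ ht₀).differentiableAt hUx₀
  have hf'' : HasDerivAt (deriv (f t₀)) a x₀ :=
    (((hol t₀ ht₀).analyticOnNhd hU).deriv x₀ hmem).differentiableAt.hasDerivAt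
  have hΦeq : Φ = Q (γ t₀) * a ^ 2 := by
    rw [hγ t₀] at hQ ⊢
    exact tendsto_nhds_unique hΦ (tendsto_mul_deriv_sq_div_sq_of_deriv_eq_zero
      hf.continuousAt hf'' hcrit hQ.continuousAt)
  have hFcontAt : ContinuousAt (Function.uncurry F) (t₀, x₀) := hFcont.continuousAt hdomain
  have hFt₀ : ContinuousAt (F t₀) x₀ :=
    hFcontAt.comp (f := fun z => (t₀, z)) (continuousAt_const.prodMk continuousAt_id)
  have hF₀ : F t₀ x₀ = -2 * a := by
    refine tendsto_nhds_unique (hFt₀.tendsto.mono_left nhdsWithin_le_nhds)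
      (((tendsto_div_sub_of_hasDerivAt hf'' hcrit).const_mul (-2)).congr' ?_)
    filter_upwards [self_mem_nhdsWithin, nhdsWithin_le_nhds hUx₀] with z hz hzU
    rw [hLoewner t₀ ht₀ z hzU hz, mul_div_assoc]
  have hγ' : HasDerivAt γ (-2 * a) t₀ := by
    rw [← hF₀, funext hγ]
    exact hasDerivAt_apply_of_hasDerivAt_zero
      (Filter.mem_of_superset hdomain fun p hp => hF p.1 hp.1 p.2 hp.2) hFcontAt
      (hξ t₀ ht₀).hasDerivAt.ofReal_comp (hcrit ▸ hf.hasDerivAt)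
  exact ⟨hΦeq, hγ', by rw [hΦeq]; ring⟩

/-- Theorem 1.3 in squared, branch-free form: motion of the tip of
the slit.  Let `f_t` be holomorphic in `z` on a neighborhood `U` of `ξ(t₀)`, with
jointly continuous time derivative `F t z` satisfying the chordal Loewner equation
`∂_t f_t(z) = -2 f_t'(z)/(z-ξ(t))` for `z ≠ ξ(t)`, let `γ(t) = f_t(ξ(t))` and assume
`f_{t₀}'(ξ(t₀)) = 0`.  If `Q` is holomorphic and nonzero at `γ(t₀)` and
`Φ = lim_{z→ξ(t₀)} Q(f_{t₀}(z))·f_{t₀}'(z)²/(z-ξ(t₀))²`, then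
`Φ = Q(γ(t₀))·f_{t₀}''(ξ(t₀))²`, `γ` is differentiable at `t₀` with
`γ'(t₀) = -2 f_{t₀}''(ξ(t₀))`, and `Q(γ(t₀))·γ'(t₀)² = 4Φ`. -/
theorem stmt_8 (T : ℝ) (hT : 0 < T) (t₀ : ℝ) (ht₀ : t₀ ∈ Set.Ioo 0 T)
    (ξ : ℝ → ℝ) (hξ : ∀ t ∈ Set.Ioo 0 T, DifferentiableAt ℝ ξ t)
    (U : Set ℂ) (hU : IsOpen U) (hmem : ((ξ t₀ : ℝ) : ℂ) ∈ U)
    (f F : ℝ → ℂ → ℂ)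
    (hol : ∀ t ∈ Set.Ioo 0 T, DifferentiableOn ℂ (f t) U)
    (hF : ∀ t ∈ Set.Ioo 0 T, ∀ z ∈ U, HasDerivAt (fun s => f s z) (F t z) t)
    (hFcont : ContinuousOn (fun p : ℝ × ℂ => F p.1 p.2) (Set.Ioo 0 T ×ˢ U))
    (hLoewner : ∀ t ∈ Set.Ioo 0 T, ∀ z ∈ U, z ≠ ((ξ t : ℝ) : ℂ) →
      F t z = -2 * deriv (f t) z / (z - ((ξ t : ℝ) : ℂ)))
    (γ : ℝ → ℂ) (hγ : ∀ t, γ t = f t ((ξ t : ℝ) : ℂ))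
    (hcrit : deriv (f t₀) ((ξ t₀ : ℝ) : ℂ) = 0)
    (Q : ℂ → ℂ) (hQ : AnalyticAt ℂ Q (γ t₀)) (hQne : Q (γ t₀) ≠ 0)
    (Φ : ℂ)
    (hΦ : Filter.Tendsto
      (fun z => Q (f t₀ z) * (deriv (f t₀) z) ^ 2 / (z - ((ξ t₀ : ℝ) : ℂ)) ^ 2)
      (nhdsWithin ((ξ t₀ : ℝ) : ℂ) {((ξ t₀ : ℝ) : ℂ)}ᶜ) (nhds Φ)) :
    Φ = Q (γ t₀) * (deriv (deriv (f t₀)) ((ξ t₀ : ℝ) : ℂ)) ^ 2 ∧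
    HasDerivAt γ (-2 * deriv (deriv (f t₀)) ((ξ t₀ : ℝ) : ℂ)) t₀ ∧
    Q (γ t₀) * (-2 * deriv (deriv (f t₀)) ((ξ t₀ : ℝ) : ℂ)) ^ 2 = 4 * Φ :=
  stmt_8_general T t₀ ht₀ ξ hξ U hU hmem f F hol hF hFcont hLoewner γ hγ hcrit Q hQ Φ hΦ
end

section
/- Let ψ > 0, N ∈ ℕ, c ∈ ℝ and ξ₀ ∈ ℝ. Let F be holomorphic on an open ball B centered at c with F(c) = 0, F'(c) > 0, and F real-valued on B ∩ ℝ (so that, after shrinking B, F maps B ∩ ℍ into ℍ). Define f(z) = ξ₀ + F(z)^ψ for z ∈ B ∩ ℍ, using the principal branch of the complex power. Let Q(w) = (w − ξ₀)^N · g(w), where g is holomorphic on a neighborhood of ξ₀ with g(ξ₀) ≠ 0. Then lim_{z→c, z∈ℍ} (z − c)·[ (Q'(f(z))/Q(f(z)))·f'(z) + 2·f''(z)/f'(z) ] = ψ·(N+2) − 2. (The residue computation in the proof of Corollary 2.5: the pulled-back quadratic differential Q_f(z) = Q(f(z))·f'(z)² has a simple pole of its logarithmic derivative at the corner point c with residue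 μ = ψ(N+2) − 2, identifying the exponent at the preimage of the base of the slit; equivalently ψ = (μ+2)/(N+2), the angle formula.) -/
/-!
Near `c`, `F` maps the upper half-plane into itself: along the vertical segment from `Re z` to `z`
the derivative of `Im F` is `Im z · Re F' > 0`, and `Im F` vanishes on the real axis. So `F ^ ψ` is
holomorphic there, and with `f - ξ₀ = F ^ ψ` the bracket becomes
`(ψ (N + 2) - 2) F'/F + ψ F^ψ (F'/F) (g'/g)(f) + 2 F''/F'`.
At the simple zero `c` we have `(z - c) F'/F → 1`, while `F ^ ψ → 0` and `F''/F'` stays bounded.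
-/

open Complex Metric Filter Topology

theorem im_pos_of_re_deriv_pos {F : ℂ → ℂ} {c ρ : ℝ}
    (hF : DifferentiableOn ℂ F (ball (c : ℂ) ρ))
    (hre : ∀ w ∈ ball (c : ℂ) ρ, 0 < (deriv F w).re)
    (hreal : ∀ x : ℝ, (x : ℂ) ∈ ball (c : ℂ) ρ → (F x).im = 0)
    {z : ℂ} (hz : z ∈ ball (c : ℂ) ρ) (him : 0 < z.im) : 0 < (F z).im := by
  set x : ℂ := (z.re : ℂ)
  have hx : x ∈ ball (c : ℂ) ρ := by
    rw [mem_ball, dist_eq_norm] at hz ⊢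
    calc ‖x - c‖ = |(z - c).re| := by simp [x, ← ofReal_sub]
      _ ≤ ‖z - c‖ := abs_re_le_norm _
      _ < ρ := hz
  have hzx : z - x = z.im * I := by simp [x, Complex.ext_iff]
  set p : ℝ → ℂ := fun t => x + t * (z - x)
  have hp : ∀ t ∈ Set.Icc (0 : ℝ) 1, p t ∈ ball (c : ℂ) ρ := fun t ht => by
    simpa [p, Complex.real_smul] using (convex_ball (c : ℂ) ρ).add_smul_sub_mem hx hz ht
  have hderiv : ∀ t ∈ Set.Icc (0 : ℝ) 1,
      HasDerivAt (fun t => (F (p t)).im) (z.im * (deriv F (p t)).re) t := by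
    intro t ht
    have hFt : HasDerivAt F (deriv F (p t)) (p t) :=
      (hF.differentiableAt (isOpen_ball.mem_nhds (hp t ht))).hasDerivAt
    have hpt : HasDerivAt (fun w : ℂ => x + w * (z - x)) (z - x) (t : ℂ) := by
      simpa using ((hasDerivAt_id (t : ℂ)).mul_const (z - x)).const_add x
    refine (imCLM.hasFDerivAt.comp_hasDerivAt t (hFt.comp (t : ℂ) hpt).comp_ofReal).congr_deriv ?_
    simp [hzx, mul_comm]
  have hmono : StrictMonoOn (fun t => (F (p t)).im) (Set.Icc 0 1) :=
    strictMonoOn_of_hasDerivWithinAt_pos (convex_Icc 0 1)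
      (fun t ht => (hderiv t ht).continuousAt.continuousWithinAt)
      (fun t ht => (hderiv t (interior_subset ht)).hasDerivWithinAt)
      (fun t ht => mul_pos him (hre _ (hp t (interior_subset ht))))
  have h01 := hmono (by norm_num) (by norm_num) zero_lt_one
  have h0 : (F x).im = 0 := hreal _ hx
  simpa [p, h0] using h01

theorem eventually_im_pos_of_deriv_re_pos {F : ℂ → ℂ} {c r : ℝ} (hr : 0 < r)
    (hF : DifferentiableOn ℂ F (ball (c : ℂ) r))
    (hreal : ∀ x : ℝ, (x : ℂ) ∈ ball (c : ℂ) r → (F x).im = 0) (hd : 0 < (deriv F c).re) :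
    ∀ᶠ z in 𝓝[{z | 0 < z.im}] (c : ℂ), 0 < (F z).im := by
  have hcont : ContinuousAt (deriv F) c := (hF.analyticAt (ball_mem_nhds _ hr)).deriv.continuousAt
  obtain ⟨ρ, hρ, hρre⟩ := eventually_nhds_iff_ball.mp
    ((continuous_re.continuousAt.comp hcont).eventually_const_lt hd)
  have hρ' : ball (c : ℂ) (min ρ r) ⊆ ball (c : ℂ) ρ := ball_subset_ball (min_le_left _ _)
  have hr' : ball (c : ℂ) (min ρ r) ⊆ ball (c : ℂ) r := ball_subset_ball (min_le_right _ _)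
  filter_upwards [self_mem_nhdsWithin, nhdsWithin_le_nhds (ball_mem_nhds (c : ℂ) (lt_min hρ hr))]
    with z hz hzb
  exact im_pos_of_re_deriv_pos (hF.mono hr') (fun w hw => hρre w (hρ' hw))
    (fun x hx => hreal x (hr' hx)) hzb hz

theorem logDeriv_sub_pow_mul {𝕜 : Type*} [NontriviallyNormedField 𝕜] {g : 𝕜 → 𝕜} {a w : 𝕜}
    (N : ℕ) (hw : w ≠ a) (hg : DifferentiableAt 𝕜 g w) (hg0 : g w ≠ 0) :
    logDeriv (fun w => (w - a) ^ N * g w) w = N / (w - a) + logDeriv g w := by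
  have hsub : DifferentiableAt 𝕜 (fun w => w - a) w := by fun_prop
  rw [logDeriv_mul (f := fun w => (w - a) ^ N) w (pow_ne_zero N (sub_ne_zero.mpr hw)) hg0
    (hsub.pow N) hg, logDeriv_fun_pow hsub, logDeriv_apply, deriv_sub_const, deriv_id'']
  ring

theorem deriv_const_add_cpow_eventuallyEq {F : ℂ → ℂ} {z a ξ : ℂ} (hF : AnalyticAt ℂ F z)
    (hz : F z ∈ slitPlane) :
    deriv (fun w => ξ + F w ^ a) =ᶠ[𝓝 z] fun w => a * F w ^ (a - 1) * deriv F w := by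
  filter_upwards [hF.eventually_analyticAt,
    hF.continuousAt.eventually_mem (isOpen_slitPlane.mem_nhds hz)] with w hw hws
  exact ((hw.differentiableAt.hasDerivAt.cpow_const hws).const_add ξ).deriv

/-- The left side is the logarithmic derivative of the pulled-back differential
`Q (f z) * f' z ^ 2`. -/
theorem logDeriv_pullback_eq {F f g Q : ℂ → ℂ} {z a ξ : ℂ} (N : ℕ)
    (hf : f = fun w => ξ + F w ^ a) (hQ : Q = fun w => (w - ξ) ^ N * g w)
    (hF : AnalyticAt ℂ F z) (hz : F z ∈ slitPlane) (hF' : deriv F z ≠ 0) (ha : a ≠ 0)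
    (hg : DifferentiableAt ℂ g (f z)) (hg0 : g (f z) ≠ 0) :
    deriv Q (f z) / Q (f z) * deriv f z + 2 * deriv (deriv f) z / deriv f z =
      (a * (N + 2) - 2) * logDeriv F z + a * F z ^ a * logDeriv F z * logDeriv g (f z)
        + 2 * logDeriv (deriv F) z := by
  have hF0 : F z ≠ 0 := slitPlane_ne_zero hz
  have hP0 : F z ^ a ≠ 0 := by simp [cpow_eq_zero_iff, hF0]
  have hfξ : f z - ξ = F z ^ a := by simp [hf]
  have hdf : deriv f z = a * F z ^ (a - 1) * deriv F z := by
    rw [hf]; exact (deriv_const_add_cpow_eventuallyEq hF hz).eq_of_nhds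
  have hddf : deriv (deriv f) z = a * ((a - 1) * F z ^ (a - 1 - 1) * deriv F z) * deriv F z
      + a * F z ^ (a - 1) * deriv (deriv F) z := by
    rw [hf, (deriv_const_add_cpow_eventuallyEq hF hz).deriv_eq]
    exact (((hF.differentiableAt.hasDerivAt.cpow_const hz).const_mul a).mul
      hF.deriv.differentiableAt.hasDerivAt).deriv
  have hlogQ : deriv Q (f z) / Q (f z) = N / F z ^ a + logDeriv g (f z) := by
    rw [← hfξ, ← logDeriv_sub_pow_mul N (sub_ne_zero.mp (hfξ ▸ hP0)) hg hg0, hQ, logDeriv_apply]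
  rw [hlogQ, hdf, hddf]
  simp only [logDeriv_apply]
  rw [cpow_sub _ _ hF0, cpow_sub _ _ hF0, cpow_sub _ _ hF0, cpow_one]
  field_simp
  ring

theorem Filter.Tendsto.cpow_const_zero {α : Type*} {l : Filter α} {F : α → ℂ} {a : ℂ}
    (hF : Tendsto F l (𝓝 0)) (ha : 0 < a.re) : Tendsto (fun x => F x ^ a) l (𝓝 0) := by
  simpa [Function.comp_def, zero_cpow (ne_of_apply_ne re ha.ne')] using
    (continuousAt_cpow_const_of_re_pos (by simp) ha).tendsto.comp hF

theorem AnalyticAt.tendsto_sub_mul_logDeriv_of_ne_zero {𝕜 : Type*} [NontriviallyNormedField 𝕜]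
    [CompleteSpace 𝕜] {F : 𝕜 → 𝕜} {c : 𝕜} (hF : AnalyticAt 𝕜 F c) (hc : F c ≠ 0) :
    Tendsto (fun z => (z - c) * logDeriv F z) (𝓝 c) (𝓝 0) := by
  simpa [logDeriv_apply] using ((continuous_sub_right c).tendsto c).mul
    (hF.deriv.continuousAt.div hF.continuousAt hc).tendsto

theorem tendsto_sub_mul_pullback_logDeriv {F g : ℂ → ℂ} {c ξ a b : ℂ} (hF : AnalyticAt ℂ F c)
    (hFc : F c = 0) (hF' : deriv F c ≠ 0) (ha : 0 < a.re) (hg : AnalyticAt ℂ g ξ) (hg0 : g ξ ≠ 0) :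
    Tendsto (fun z => (z - c) * (b * logDeriv F z
        + a * F z ^ a * logDeriv F z * logDeriv g (ξ + F z ^ a) + 2 * logDeriv (deriv F) z))
      (𝓝[≠] c) (𝓝 b) := by
  have hP : Tendsto (fun z => F z ^ a) (𝓝[≠] c) (𝓝 0) :=
    ((hFc ▸ hF.continuousAt.tendsto).cpow_const_zero ha).mono_left nhdsWithin_le_nhds
  have hG : Tendsto (fun z => logDeriv g (ξ + F z ^ a)) (𝓝[≠] c) (𝓝 (logDeriv g ξ)) :=
    (hg.deriv.continuousAt.div hg.continuousAt hg0).tendsto.comp (by simpa using hP.const_add ξ)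
  have hT := hF.tendsto_mul_logDeriv_simple_zero hFc hF'
  have hR : Tendsto (fun z => (z - c) * logDeriv (deriv F) z) (𝓝[≠] c) (𝓝 0) :=
    (hF.deriv.tendsto_sub_mul_logDeriv_of_ne_zero hF').mono_left nhdsWithin_le_nhds
  convert ((hT.const_mul b).add (((hP.const_mul a).mul hT).mul hG)).add (hR.const_mul 2) using 1
  · ext z; ring
  · simp

/-- residue computation in the proof of Corollary 2.5: the angle
formula `μ = ψ(N+2) - 2`.  Let `F` be holomorphic on a ball `B` about `c ∈ ℝ` with
`F(c) = 0`, `F'(c) > 0`, `F` real on `B ∩ ℝ`; let `f(z) = ξ₀ + F(z)^ψ` (principal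
branch), and `Q(w) = (w-ξ₀)^N·g(w)` with `g` holomorphic and nonzero at `ξ₀`.  Then
`(z-c)·[(Q'(f z)/Q(f z))·f'(z) + 2 f''(z)/f'(z)] → ψ(N+2) - 2` as `z → c` in `ℍ`. -/
theorem stmt_14 (ψ : ℝ) (hψ : 0 < ψ) (N : ℕ) (c ξ₀ : ℝ)
    (r : ℝ) (hr : 0 < r) (F : ℂ → ℂ)
    (hF : DifferentiableOn ℂ F (Metric.ball ((c : ℝ) : ℂ) r))
    (hFc : F ((c : ℝ) : ℂ) = 0)
    (hF' : ∃ d : ℝ, 0 < d ∧ deriv F ((c : ℝ) : ℂ) = (d : ℂ))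
    (hFreal : ∀ x : ℝ, ((x : ℝ) : ℂ) ∈ Metric.ball ((c : ℝ) : ℂ) r → (F x).im = 0)
    (f : ℂ → ℂ) (hf : ∀ z, f z = (ξ₀ : ℂ) + F z ^ ((ψ : ℝ) : ℂ))
    (g : ℂ → ℂ) (hg : AnalyticAt ℂ g ((ξ₀ : ℝ) : ℂ)) (hg0 : g ((ξ₀ : ℝ) : ℂ) ≠ 0)
    (Q : ℂ → ℂ) (hQ : ∀ w, Q w = (w - (ξ₀ : ℂ)) ^ N * g w) :
    Filter.Tendsto
      (fun z => (z - ((c : ℝ) : ℂ)) *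
        ((deriv Q (f z) / Q (f z)) * deriv f z
          + 2 * deriv (deriv f) z / deriv f z))
      (nhdsWithin ((c : ℝ) : ℂ) {z : ℂ | 0 < z.im})
      (nhds (((ψ * ((N : ℝ) + 2) - 2 : ℝ) : ℂ))) := by
  obtain ⟨d, hd, hFd⟩ := hF'
  have hFc' : AnalyticAt ℂ F c := hF.analyticAt (ball_mem_nhds _ hr)
  have hF'c : deriv F c ≠ 0 := by rw [hFd]; exact_mod_cast hd.ne'
  have hψ' : 0 < (ψ : ℂ).re := by simpa using hψ
  have hfξ : Tendsto f (𝓝 c) (𝓝 ξ₀) := by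
    have hF0 : Tendsto F (𝓝 (c : ℂ)) (𝓝 0) := hFc ▸ hFc'.continuousAt.tendsto
    simpa [funext hf] using (hF0.cpow_const_zero hψ').const_add (ξ₀ : ℂ)
  refine ((tendsto_sub_mul_pullback_logDeriv hFc' hFc hF'c hψ' hg hg0).mono_left
    (nhdsWithin_mono _ fun z hz hzc => by simp_all)).congr' ?_
  filter_upwards [eventually_im_pos_of_deriv_re_pos hr hF hFreal (by simp [hFd, hd]),
    nhdsWithin_le_nhds (hFc'.eventually_analyticAt.and
      (hFc'.deriv.continuousAt.eventually_ne hF'c)),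
    nhdsWithin_le_nhds (hfξ.eventually (hg.eventually_analyticAt.and
      (hg.continuousAt.eventually_ne hg0)))]
    with z him ⟨hFz, hF'z⟩ ⟨hgz, hg0z⟩
  rw [logDeriv_pullback_eq N (funext hf) (funext hQ) hFz (.inr him.ne') hF'z
    (ofReal_ne_zero.mpr hψ.ne') hgz.differentiableAt hg0z, hf]
  push_cast
  ring
end
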